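/- For nonzero vectors x, y, z ∈ ℂⁿ, the rank-one matrices x z* and y z* are Birkhoff–James orthogonal (in operator norm) if and only if x* y = 0. -/

import Mathlib

/-!
A rank-one operator `u ↦ ⟪z, u⟫ v` has norm `‖v‖ ‖z‖`, so `‖x z* + c y z*‖ = ‖x + c y‖ ‖z‖` and,
since `z ≠ 0`, the orthogonality of the matrices is the Birkhoff–James orthogonality of `x` and `y`
in `ℂⁿ`. In an inner product space the latter is ordinary orthogonality: choosing `c y` to be
minus the projection of `x` onto the line `ℂ y`, Pythagoras forces that projection to vanish.
-/

open Matrix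

/-- The operator (spectral) norm of a complex matrix, induced by the Euclidean norm on `ℂⁿ`. -/
noncomputable def opNorm {n : ℕ} (A : Matrix (Fin n) (Fin n) ℂ) : ℝ :=
  ‖Matrix.toEuclideanCLM (𝕜 := ℂ) (n := Fin n) A‖

/-- Birkhoff–James orthogonality of matrices with respect to the operator norm. -/
def BJ {n : ℕ} (A B : Matrix (Fin n) (Fin n) ℂ) : Prop :=
  ∀ c : ℂ, opNorm A ≤ opNorm (A + c • B)

open scoped InnerProductSpace

theorem forall_norm_le_norm_add_smul_iff_inner_eq_zero {𝕜 E : Type*} [RCLike 𝕜]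
    [NormedAddCommGroup E] [InnerProductSpace 𝕜 E] (a b : E) :
    (∀ c : 𝕜, ‖a‖ ≤ ‖a + c • b‖) ↔ ⟪a, b⟫_𝕜 = 0 := by
  constructor
  · intro h
    set K := 𝕜 ∙ b
    obtain ⟨c, hc⟩ := Submodule.mem_span_singleton.mp (K.starProjection_apply_mem a)
    have hle : ‖a‖ ≤ ‖Kᗮ.starProjection a‖ := by
      simpa [← hc, sub_eq_add_neg] using h (-c)
    have hproj : K.starProjection a = 0 := by
      have hpyth := K.norm_sq_eq_add_norm_sq_starProjection a
      have : ‖K.starProjection a‖ ^ 2 ≤ 0 := by nlinarith [norm_nonneg a]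
      simpa using this
    rw [inner_eq_zero_symm, ← Submodule.mem_orthogonal_singleton_iff_inner_right]
    simpa [hproj] using K.sub_starProjection_mem_orthogonal a
  · intro h c
    have hpyth := norm_add_sq_eq_norm_sq_add_norm_sq_of_inner_eq_zero a (c • b)
      (by rw [inner_smul_right, h, mul_zero])
    refine le_of_sq_le_sq ?_ (norm_nonneg _)
    nlinarith [mul_self_nonneg ‖c • b‖]

theorem toEuclideanCLM_vecMulVec_star {𝕜 n : Type*} [RCLike 𝕜] [Fintype n] [DecidableEq n]
    (x z : n → 𝕜) :
    toEuclideanCLM (𝕜 := 𝕜) (vecMulVec x (star z)) =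
      InnerProductSpace.rankOne 𝕜 (WithLp.toLp 2 x) (WithLp.toLp 2 z) := by
  apply ContinuousLinearMap.coe_injective
  rw [coe_toEuclideanCLM_eq_toEuclideanLin, ← LinearEquiv.eq_symm_apply,
    InnerProductSpace.symm_toEuclideanLin_rankOne]

theorem opNorm_vecMulVec_star {n : ℕ} (x z : Fin n → ℂ) :
    opNorm (vecMulVec x (star z)) = ‖WithLp.toLp 2 x‖ * ‖WithLp.toLp 2 z‖ := by
  rw [opNorm, toEuclideanCLM_vecMulVec_star, InnerProductSpace.norm_rankOne]

theorem stmt7 {n : ℕ} (x y z : Fin n → ℂ) (hz : z ≠ 0) :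
    BJ (Matrix.vecMulVec x (star z)) (Matrix.vecMulVec y (star z)) ↔
      dotProduct (star x) y = 0 := by
  have hz' : 0 < ‖WithLp.toLp 2 z‖ := by simpa using hz
  calc BJ (vecMulVec x (star z)) (vecMulVec y (star z))
      ↔ ∀ c : ℂ, ‖WithLp.toLp 2 x‖ ≤ ‖WithLp.toLp 2 x + c • WithLp.toLp 2 y‖ :=
        forall_congr' fun c => by
          rw [← smul_vecMulVec, ← add_vecMulVec, opNorm_vecMulVec_star, opNorm_vecMulVec_star,
            mul_le_mul_iff_of_pos_right hz', WithLp.toLp_add, WithLp.toLp_smul]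
    _ ↔ ⟪WithLp.toLp 2 x, WithLp.toLp 2 y⟫_ℂ = 0 :=
        forall_norm_le_norm_add_smul_iff_inner_eq_zero _ _
    _ ↔ star x ⬝ᵥ y = 0 := by rw [EuclideanSpace.inner_toLp_toLp, dotProduct_comm]
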